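/- Let X and Y be real Banach spaces and let F : ℝ × X → Y be a continuously Fréchet differentiable map. Let (λ*, w*) ∈ ℝ × X, and suppose there are constants ρ > 0, K > 0, L₁, L₂, L₃, L₄ ≥ 0, ℓ_w > 0, ℓ_λ ≥ 0 such that: (H1) ‖F(λ*, w*)‖_Y ≤ ρ; (H2) the partial Fréchet derivative D_wF(λ*, w*) : X → Y is invertible with bounded inverse satisfying ‖D_wF(λ*, w*)⁻¹‖_{L(Y,X)} ≤ K; (H3) for all (λ, w) with ‖w - w*‖_X ≤ ℓ_w and |λ - λ*| ≤ ℓ_λ one has ‖D_wF(λ, w) - D_wF(λ*, w*)‖_{L(X,Y)} ≤ L₁‖w - w*‖_X + L₂|λ - λ*|; (H4) for all λ with |λ - λ*| ≤ ℓ_λ one has ‖D_λF(λ, w*)‖_Y ≤ L₃ + L₄|λ - λ*|. Finally assume 4K²ρL₁ < 1 and 2Kρ < ℓ_w. Then there exist constants δ_λ, δ_w with 0 ≤ δ_λ ≤ ℓ_λ, 0 < δ_w ≤ ℓ_w, satisfying 2KL₁δ_w + 2KL₂δ_λ ≤ 1 and 2Kρ + 2KL₃δ_λ + 2KL₄δ_λ²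 ≤ δ_w, and for every such pair (δ_λ, δ_w) the following holds: for every λ ∈ ℝ with |λ - λ*| ≤ δ_λ there exists a uniquely determined w(λ) ∈ X with ‖w(λ) - w*‖_X ≤ δ_w such that F(λ, w(λ)) = 0; in other words, all solutions of F(λ, w) = 0 with |λ - λ*| ≤ δ_λ and ‖w - w*‖_X ≤ δ_w lie on the graph of the map λ ↦ w(λ). -/

import Mathlib

open Metric Set

set_option maxHeartbeats 1000000 in
/-- **Constructive Implicit Function Theorem.**
Let `X`, `Y` be real Banach spaces and `F : ℝ × X → Y` continuously Fréchet
differentiable.  Suppose `(λ*, w*)` satisfies hypotheses (H1)–(H4) with constants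
`ρ, K > 0`, `L₁, L₂, L₃, L₄ ≥ 0`, `ℓ_w > 0`, `ℓ_λ ≥ 0`, and that `4K²ρL₁ < 1` and
`2Kρ < ℓ_w`.  Then there exist constants `δ_λ ∈ [0, ℓ_λ]`, `δ_w ∈ (0, ℓ_w]` with
`2KL₁δ_w + 2KL₂δ_λ ≤ 1` and `2Kρ + 2KL₃δ_λ + 2KL₄δ_λ² ≤ δ_w`, and for every such
pair: for each `λ` with `|λ - λ*| ≤ δ_λ` there is a unique `w(λ)` with
`‖w(λ) - w*‖ ≤ δ_w` and `F(λ, w(λ)) = 0`; all solutions in the corresponding box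
lie on the graph of `λ ↦ w(λ)`. -/
theorem constructive_implicit_function_theorem
    {X Y : Type*} [NormedAddCommGroup X] [NormedSpace ℝ X] [CompleteSpace X]
    [NormedAddCommGroup Y] [NormedSpace ℝ Y] [CompleteSpace Y]
    (F : ℝ × X → Y) (hF : ContDiff ℝ 1 F)
    (lamStar : ℝ) (wStar : X)
    (ρ K L₁ L₂ L₃ L₄ lw llam : ℝ)
    (hρ : 0 < ρ) (hK : 0 < K)
    (hL₁ : 0 ≤ L₁) (hL₂ : 0 ≤ L₂) (hL₃ : 0 ≤ L₃) (hL₄ : 0 ≤ L₄)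
    (hlw : 0 < lw) (hllam : 0 ≤ llam)
    -- (H1): residual bound
    (H1 : ‖F (lamStar, wStar)‖ ≤ ρ)
    -- (H2): the partial Fréchet derivative `D_w F(λ*, w*)` has a bounded inverse `B`
    -- with `‖B‖ ≤ K`
    (B : Y →L[ℝ] X)
    (H2left : ∀ x : X, B (fderiv ℝ (fun w => F (lamStar, w)) wStar x) = x)
    (H2right : ∀ y : Y, fderiv ℝ (fun w => F (lamStar, w)) wStar (B y) = y)
    (H2bound : ‖B‖ ≤ K)
    -- (H3): local Lipschitz bound for `D_w F`
    (H3 : ∀ lam : ℝ, ∀ w : X, ‖w - wStar‖ ≤ lw → |lam - lamStar| ≤ llam →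
      ‖fderiv ℝ (fun w' => F (lam, w')) w
          - fderiv ℝ (fun w' => F (lamStar, w')) wStar‖ ≤
        L₁ * ‖w - wStar‖ + L₂ * |lam - lamStar|)
    -- (H4): bound on the partial derivative `D_λ F(λ, w*)`
    (H4 : ∀ lam : ℝ, |lam - lamStar| ≤ llam →
      ‖deriv (fun t => F (t, wStar)) lam‖ ≤ L₃ + L₄ * |lam - lamStar|)
    (hcond1 : 4 * K ^ 2 * ρ * L₁ < 1) (hcond2 : 2 * K * ρ < lw) :
    (∃ δlam δw : ℝ, 0 ≤ δlam ∧ δlam ≤ llam ∧ 0 < δw ∧ δw ≤ lw ∧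
        2 * K * L₁ * δw + 2 * K * L₂ * δlam ≤ 1 ∧
        2 * K * ρ + 2 * K * L₃ * δlam + 2 * K * L₄ * δlam ^ 2 ≤ δw) ∧
    (∀ δlam δw : ℝ, 0 ≤ δlam → δlam ≤ llam → 0 < δw → δw ≤ lw →
        2 * K * L₁ * δw + 2 * K * L₂ * δlam ≤ 1 →
        2 * K * ρ + 2 * K * L₃ * δlam + 2 * K * L₄ * δlam ^ 2 ≤ δw →
        ∃ w : ℝ → X, ∀ lam : ℝ, |lam - lamStar| ≤ δlam →
          ‖w lam - wStar‖ ≤ δw ∧ F (lam, w lam) = 0 ∧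
          ∀ w' : X, ‖w' - wStar‖ ≤ δw → F (lam, w') = 0 → w' = w lam) := by
  constructor
  · exact ⟨0, 2 * K * ρ, le_rfl, hllam, by positivity, hcond2.le,
      by nlinarith, by nlinarith⟩
  intro δlam δw hδlam0 hδlamle hδw0 hδwle hc1 hc2
  have hFd : Differentiable ℝ F := hF.differentiable one_ne_zero
  have hdiffw : ∀ (lam : ℝ), Differentiable ℝ (fun w : X => F (lam, w)) := fun lam =>
    hFd.comp ((differentiable_const lam).prodMk differentiable_id)
  have hdifft : Differentiable ℝ (fun t : ℝ => F (t, wStar)) :=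
    hFd.comp (differentiable_id.prodMk (differentiable_const _))
  set D := fderiv ℝ (fun w => F (lamStar, w)) wStar with hD
  have key : ∀ lam : ℝ, |lam - lamStar| ≤ δlam →
      ∃ x : X, ‖x - wStar‖ ≤ δw ∧ F (lam, x) = 0 ∧
        ∀ w' : X, ‖w' - wStar‖ ≤ δw → F (lam, w') = 0 → w' = x := by
    intro lam hlam
    set s := Metric.closedBall wStar δw with hs
    have hws : wStar ∈ s := Metric.mem_closedBall_self hδw0.le
    have hconv : Convex ℝ s := convex_closedBall _ _
    set T : X → X := fun w => w - B (F (lam, w)) with hT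
    have hBle : ∀ y : Y, ‖B y‖ ≤ K * ‖y‖ := fun y =>
      (B.le_opNorm y).trans (mul_le_mul_of_nonneg_right H2bound (norm_nonneg y))
    -- contraction estimate
    have contr : ∀ x ∈ s, ∀ y ∈ s, ‖T x - T y‖ ≤ (1 / 2) * ‖x - y‖ := by
      intro x hx y hy
      have hbound : ∀ z ∈ s, ‖fderiv ℝ (fun w' => F (lam, w')) z - D‖ ≤
          L₁ * δw + L₂ * δlam := by
        intro z hz
        have hz' : ‖z - wStar‖ ≤ δw := by
          rwa [Metric.mem_closedBall, dist_eq_norm] at hz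
        refine (H3 lam z (hz'.trans hδwle) (hlam.trans hδlamle)).trans ?_
        have h1 : L₁ * ‖z - wStar‖ ≤ L₁ * δw := mul_le_mul_of_nonneg_left hz' hL₁
        have h2 : L₂ * |lam - lamStar| ≤ L₂ * δlam := mul_le_mul_of_nonneg_left hlam hL₂
        linarith
      have hmvt := hconv.norm_image_sub_le_of_norm_fderiv_le'
        (f := fun w' => F (lam, w')) (φ := D)
        (fun z _ => hdiffw lam z) hbound hy hx
      -- hmvt : ‖F (lam, x) - F (lam, y) - D (x - y)‖ ≤ (L₁δw + L₂δlam) * ‖x - y‖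
      have heq : T x - T y = -(B (F (lam, x) - F (lam, y) - D (x - y))) := by
        have h0 : B (D (x - y)) = x - y := H2left _
        rw [map_sub, map_sub, h0]
        simp only [hT]
        abel
      rw [heq, norm_neg]
      calc ‖B (F (lam, x) - F (lam, y) - D (x - y))‖
          ≤ K * ‖F (lam, x) - F (lam, y) - D (x - y)‖ := hBle _
        _ ≤ K * ((L₁ * δw + L₂ * δlam) * ‖x - y‖) :=
            mul_le_mul_of_nonneg_left hmvt hK.le
        _ ≤ (1 / 2) * ‖x - y‖ := by
            nlinarith [norm_nonneg (x - y), mul_nonneg (mul_nonneg hK.le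
              (by positivity : (0:ℝ) ≤ L₁ * δw + L₂ * δlam)) (norm_nonneg (x - y))]
    -- base point estimate
    have hbase : ‖T wStar - wStar‖ ≤ δw / 2 := by
      have hFlam : ‖F (lam, wStar) - F (lamStar, wStar)‖ ≤
          (L₃ + L₄ * δlam) * ‖lam - lamStar‖ := by
        refine Convex.norm_image_sub_le_of_norm_deriv_le
          (f := fun t : ℝ => F (t, wStar)) (s := Set.uIcc lamStar lam)
          (fun t _ => hdifft t) ?_ (convex_uIcc _ _)
          Set.left_mem_uIcc Set.right_mem_uIcc
        intro t ht
        have habs : |t - lamStar| ≤ |lam - lamStar| := by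
          rw [Set.uIcc_eq_union] at ht
          rcases ht with ht | ht <;> rw [abs_sub_le_iff] <;>
            cases' abs_cases (lam - lamStar) with h h <;>
            constructor <;> simp only [Set.mem_Icc] at ht <;> linarith [h.1, h.2]
        have h4 := H4 t ((habs.trans hlam).trans hδlamle)
        have : L₄ * |t - lamStar| ≤ L₄ * δlam :=
          mul_le_mul_of_nonneg_left (habs.trans hlam) hL₄
        linarith
      have hFw : ‖F (lam, wStar)‖ ≤ ρ + L₃ * δlam + L₄ * δlam ^ 2 := by
        have := norm_sub_norm_le (F (lam, wStar)) (F (lamStar, wStar))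
        have hmul : (L₃ + L₄ * δlam) * ‖lam - lamStar‖ ≤
            (L₃ + L₄ * δlam) * δlam := by
          refine mul_le_mul_of_nonneg_left ?_ (by positivity)
          rwa [Real.norm_eq_abs]
        nlinarith
      have : T wStar - wStar = -(B (F (lam, wStar))) := by simp [hT]
      rw [this, norm_neg]
      calc ‖B (F (lam, wStar))‖ ≤ K * ‖F (lam, wStar)‖ := hBle _
        _ ≤ K * (ρ + L₃ * δlam + L₄ * δlam ^ 2) :=
            mul_le_mul_of_nonneg_left hFw hK.le
        _ ≤ δw / 2 := by nlinarith
    -- invariance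
    have hmaps : ∀ x ∈ s, T x ∈ s := by
      intro x hx
      have hx' : ‖x - wStar‖ ≤ δw := by
        rwa [Metric.mem_closedBall, dist_eq_norm] at hx
      have h1 := contr x hx wStar hws
      rw [Metric.mem_closedBall, dist_eq_norm]
      calc ‖T x - wStar‖ ≤ ‖T x - T wStar‖ + ‖T wStar - wStar‖ :=
            norm_sub_le_norm_sub_add_norm_sub _ _ _
        _ ≤ (1 / 2) * ‖x - wStar‖ + δw / 2 := add_le_add h1 hbase
        _ ≤ δw := by linarith
    -- fixed point on the subtype
    haveI : Nonempty s := ⟨⟨wStar, hws⟩⟩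
    haveI : CompleteSpace s := Metric.isClosed_closedBall.completeSpace_coe
    set g : s → s := fun x => ⟨T x.1, hmaps x.1 x.2⟩ with hg
    have hcontr : ContractingWith (1 / 2 : NNReal) g := by
      constructor
      · exact_mod_cast (by norm_num : ((1 / 2 : NNReal) : ℝ) < 1)
      · refine LipschitzWith.of_dist_le_mul fun x y => ?_
        rw [Subtype.dist_eq, Subtype.dist_eq, dist_eq_norm, dist_eq_norm]
        have h := contr x.1 x.2 y.1 y.2
        have hc : ((1 / 2 : NNReal) : ℝ) = 1 / 2 := by norm_num
        rw [hc]
        exact h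
    set x₀ := ContractingWith.fixedPoint g hcontr with hx₀
    have hfix : g x₀ = x₀ := hcontr.fixedPoint_isFixedPt
    have hTfix : T x₀.1 = x₀.1 := congrArg Subtype.val hfix
    have hFzero : ∀ z : X, T z = z ↔ F (lam, z) = 0 := by
      intro z
      constructor
      · intro h
        have hBz : B (F (lam, z)) = 0 := by
          have : z - B (F (lam, z)) = z := h
          have := sub_eq_self.mp this
          exact this
        have := H2right (F (lam, z))
        rw [hBz] at this
        rw [← this, map_zero]
      · intro h
        simp [hT, h]
    refine ⟨x₀.1, ?_, (hFzero _).mp hTfix, ?_⟩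
    · have := x₀.2
      rwa [Metric.mem_closedBall, dist_eq_norm] at this
    · intro w' hw' hFw'
      have hw's : w' ∈ s := by rwa [Metric.mem_closedBall, dist_eq_norm]
      have : g ⟨w', hw's⟩ = ⟨w', hw's⟩ := by
        ext
        exact (hFzero w').mpr hFw'
      have := hcontr.fixedPoint_unique (x := ⟨w', hw's⟩) this
      exact congrArg Subtype.val this
  refine ⟨fun lam => if h : |lam - lamStar| ≤ δlam then (key lam h).choose else wStar, ?_⟩
  intro lam hlam
  simp only [dif_pos hlam]
  exact (key lam hlam).choose_spec
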